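/- arXiv:1604.03098 — 3 statements merged into one kernel-verified Lean document; each statement's English description precedes it below -/
import Mathlib

section
/- Let Ω be a complete residuated lattice, A a set, α : A×A→Ω a similarity relation, and u, v, w : A→Ω distributions, where v is simple with respect to α in the sense that v(a)⊗v(a') ≤ α(a,a') for all a, a' ∈ A. Then the similarity degrees compose transitively: [v = w]_α ⊗ [u = v]_α ≤ [u = w]_α. -/
/-- A complete residuated lattice: a complete lattice with a commutative monoid
structure whose unit is the top element, together with a residuum satisfying the
residuation equivalence `z ≤ (x ⇒ y) ↔ x ⊗ z ≤ y`. The monoid operation `*` plays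
the role of `⊗`. -/
class CompleteResiduatedLattice (Ω : Type*) extends CompleteLattice Ω, CommMonoid Ω where
  one_eq_top : (1 : Ω) = ⊤
  res : Ω → Ω → Ω
  residuation : ∀ x y z : Ω, z ≤ res x y ↔ x * z ≤ y

variable {Ω : Type*} [CompleteResiduatedLattice Ω]

/-- A similarity relation on `A`: reflexive with value `⊤`, symmetric, and
transitive in the sense `α(a',a'') ⊗ α(a,a') ≤ α(a,a'')`. -/
def IsSimilarity {A : Type*} (α : A × A → Ω) : Prop :=
  (∀ a : A, α (a, a) = ⊤) ∧
  (∀ a a' : A, α (a, a') = α (a', a)) ∧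
  (∀ a a' a'' : A, α (a', a'') * α (a, a') ≤ α (a, a''))

/-- Similarity degree of two distributions `u v : A → Ω` with respect to a similarity
relation `α`: `[u = v]_α = ⨆ a a', v a' ⊗ α(a,a') ⊗ u a`. -/
noncomputable def simDeg {A : Type*} (α : A × A → Ω) (u v : A → Ω) : Ω :=
  ⨆ a : A, ⨆ a' : A, v a' * α (a, a') * u a


private lemma crl_mul_le_mul {Ω : Type*} [CompleteResiduatedLattice Ω]
    {a b c d : Ω} (h1 : a ≤ b) (h2 : c ≤ d) : a * c ≤ b * d := by
  have mono : ∀ x y z : Ω, y ≤ z → x * y ≤ x * z := by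
    intro x y z h
    exact (CompleteResiduatedLattice.residuation x (x * z) y).1
      (h.trans ((CompleteResiduatedLattice.residuation x (x * z) z).2 le_rfl))
  calc a * c ≤ a * d := mono a c d h2
    _ = d * a := mul_comm _ _
    _ ≤ d * b := mono d a b h1
    _ = b * d := mul_comm _ _

private lemma crl_mul_iSup_le {Ω : Type*} [CompleteResiduatedLattice Ω] {ι : Sort*}
    {x y : Ω} {f : ι → Ω} (h : ∀ i, x * f i ≤ y) : x * (⨆ i, f i) ≤ y := by
  rw [← CompleteResiduatedLattice.residuation]
  exact iSup_le fun i => (CompleteResiduatedLattice.residuation x y (f i)).2 (h i)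

/-- Similarity degrees compose transitively: if `v` is simple with respect to `α`
(`v a ⊗ v a' ≤ α(a,a')`), then `[v = w]_α ⊗ [u = v]_α ≤ [u = w]_α`. -/
theorem simDeg_trans {A : Type*} (α : A × A → Ω) (hα : IsSimilarity α)
    (u v w : A → Ω) (hsimple : ∀ a a' : A, v a * v a' ≤ α (a, a')) :
    simDeg α v w * simDeg α u v ≤ simDeg α u w := by
  obtain ⟨hrefl, hsymm, htrans⟩ := hα
  rw [mul_comm]
  unfold simDeg
  apply crl_mul_iSup_le; intro b
  apply crl_mul_iSup_le; intro b'
  rw [mul_comm]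
  apply crl_mul_iSup_le; intro a
  apply crl_mul_iSup_le; intro a'
  have h1 : v b * v a' ≤ α (a', b) := by rw [← hsymm]; exact hsimple b a'
  have h2 : α (b, b') * (v b * v a') ≤ α (a', b') :=
    le_trans (crl_mul_le_mul le_rfl h1) (htrans a' b b')
  have h3 : α (b, b') * (v b * v a') * α (a, a') ≤ α (a, b') :=
    le_trans (crl_mul_le_mul h2 le_rfl) (htrans a a' b')
  have key : w b' * α (b, b') * v b * (v a' * α (a, a') * u a)
      = w b' * (α (b, b') * (v b * v a') * α (a, a')) * u a := by ac_rfl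
  calc w b' * α (b, b') * v b * (v a' * α (a, a') * u a)
      = w b' * (α (b, b') * (v b * v a') * α (a, a')) * u a := key
    _ ≤ w b' * α (a, b') * u a := crl_mul_le_mul (crl_mul_le_mul le_rfl h3) le_rfl
    _ ≤ ⨆ a' : A, w a' * α (a, a') * u a := le_iSup (fun a' => w a' * α (a, a') * u a) b'
    _ ≤ ⨆ a : A, ⨆ a' : A, w a' * α (a, a') * u a := le_iSup (fun a => ⨆ a' : A, w a' * α (a, a') * u a) a
end

section
/- Let m = n + p and let x : Fin m → ℝ take values in [0,1], the first n inputs being negated and the last p positive. If the bias is b = -p + 1, then the Łukasiewicz neuron output min(1, max(0, -∑_{i<n} x_i + ∑_{n≤i<m} x_i + (-p+1))) equals the iterated Łukasiewicz conjunction ¬x_1 ⊗ ... ⊗ ¬x_n ⊗ x_{n+1} ⊗ ... ⊗ x_m, where ¬x = 1 - x and a⊗b = max(a + b - 1, 0). Equivalently, both sides equal max(∑_{i<n}(1 - x_i) + ∑_{n≤i<m} x_i - (m - 1), 0). -/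
/-- Łukasiewicz conjunction (t-norm) on the reals: `a ⊗ b = max (a + b - 1) 0`. -/
noncomputable def lukConj (a b : ℝ) : ℝ := max (a + b - 1) 0

open Finset

/- Once the running value `max (s - (k - 1)) 0` has hit `0` it stays `0`, since every `a ≤ 1`;
before that, each `a ⊗ ·` just adds `a - 1`. -/
theorem foldr_lukConj_eq_max (l : List ℝ) (hl : ∀ a ∈ l, a ≤ 1) :
    l.foldr lukConj 1 = max (l.sum - ((l.length : ℝ) - 1)) 0 := by
  induction l with
  | nil => simp
  | cons a t ih =>
    have ha : a ≤ 1 := hl a List.mem_cons_self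
    rw [List.foldr_cons, ih fun b hb => hl b (List.mem_cons_of_mem a hb), lukConj,
      List.sum_cons, List.length_cons]
    push_cast
    rcases le_total (t.sum - ((t.length : ℝ) - 1)) 0 with ht | ht
    · rw [max_eq_right ht, max_eq_right (by linarith), max_eq_right (by linarith)]
    · rw [max_eq_left ht]
      ring_nf

theorem sum_ite_one_sub_eq_sum_ite_neg_add_card {ι : Type*} [Fintype ι] (P : ι → Prop)
    [DecidablePred P] (f : ι → ℝ) :
    ∑ i, (if P i then 1 - f i else f i) = ∑ i, (if P i then -f i else f i) + #{i | P i} := by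
  rw [← sub_eq_iff_eq_add', ← sum_sub_distrib]
  simp only [← sum_boole]
  exact sum_congr rfl fun i _ => by split_ifs <;> ring

theorem min_one_max_zero_sub_pred_eq {t m : ℝ} (h : t ≤ m) :
    min 1 (max 0 (t - (m - 1))) = max (t - (m - 1)) 0 := by
  rw [max_comm, min_eq_right (max_le (by linarith) zero_le_one)]

/-- A Łukasiewicz neuron with `n` negative unit weights, `p` positive unit weights
and bias `b = -p + 1` is conjunctive: its output equals the iterated Łukasiewicz
conjunction `¬x_1 ⊗ ... ⊗ ¬x_n ⊗ x_{n+1} ⊗ ... ⊗ x_m` (where `¬x = 1 - x`), and both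
sides equal `max (∑_{i<n} (1 - x_i) + ∑_{n≤i<m} x_i - (m - 1)) 0` for `m = n + p`. -/
theorem conjunctive_neuron (n p : ℕ) (x : Fin (n + p) → ℝ)
    (hx : ∀ i, x i ∈ Set.Icc (0:ℝ) 1) :
    min 1 (max 0 ((∑ i : Fin (n + p), (if (i : ℕ) < n then -(x i) else x i)) + (-(p:ℝ) + 1)))
        = (List.ofFn (fun i : Fin (n + p) => if (i : ℕ) < n then 1 - x i else x i)).foldr
            lukConj 1 ∧
    min 1 (max 0 ((∑ i : Fin (n + p), (if (i : ℕ) < n then -(x i) else x i)) + (-(p:ℝ) + 1)))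
        = max ((∑ i : Fin (n + p), (if (i : ℕ) < n then 1 - x i else x i))
            - (((n : ℝ) + (p : ℝ)) - 1)) 0 := by
  set lit : Fin (n + p) → ℝ := fun i => if (i : ℕ) < n then 1 - x i else x i
  have hlit : ∀ i, lit i ≤ 1 := fun i => by
    simp only [lit]
    split_ifs <;> linarith [(hx i).1, (hx i).2]
  have hsum : ∑ i, lit i = ∑ i : Fin (n + p), (if (i : ℕ) < n then -(x i) else x i) + n := by
    rw [sum_ite_one_sub_eq_sum_ite_neg_add_card, Fin.card_filter_val_lt, min_eq_right (by omega)]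
  have hbound : ∑ i, lit i ≤ (n : ℝ) + p := by
    simpa using sum_le_card_nsmul univ lit 1 fun i _ => hlit i
  have hneuron : min 1 (max 0 ((∑ i : Fin (n + p), (if (i : ℕ) < n then -(x i) else x i))
      + (-(p:ℝ) + 1))) = max (∑ i, lit i - (((n : ℝ) + p) - 1)) 0 := by
    rw [← min_one_max_zero_sub_pred_eq hbound, hsum]
    ring_nf
  refine ⟨?_, hneuron⟩
  rw [hneuron, foldr_lukConj_eq_max _ (by simpa [List.mem_ofFn] using hlit), List.sum_ofFn,
    List.length_ofFn]
  push_cast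
  ring
end

section
/- Let m = n + p and let x : Fin m → ℝ take values in [0,1], the first n inputs being negated and the last p positive. If the bias is b = n, then the Łukasiewicz neuron output min(1, max(0, -∑_{i<n} x_i + ∑_{n≤i<m} x_i + n)) equals the iterated Łukasiewicz disjunction ¬x_1 ⊕ ... ⊕ ¬x_n ⊕ x_{n+1} ⊕ ... ⊕ x_m, where ¬x = 1 - x and a⊕b = min(a + b, 1). Equivalently, both sides equal min(∑_{i<n}(1 - x_i) + ∑_{n≤i<m} x_i, 1). -/
/-- Łukasiewicz disjunction on the reals: `a ⊕ b = min (a + b) 1`. -/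
noncomputable def lukDisj (a b : ℝ) : ℝ := min (a + b) 1

lemma foldr_lukDisj (l : List ℝ) (h : ∀ a ∈ l, 0 ≤ a) :
    l.foldr lukDisj 0 = min l.sum 1 := by
  induction l with
  | nil => simp
  | cons a t ih =>
    have ha : 0 ≤ a := h a (by simp)
    have ht : 0 ≤ t.sum := List.sum_nonneg (fun b hb => h b (by simp [hb]))
    rw [List.foldr_cons, ih (fun b hb => h b (by simp [hb])), List.sum_cons]
    unfold lukDisj
    rcases le_or_gt t.sum 1 with hs | hs
    · rw [min_eq_left hs]
    · rw [min_eq_right hs.le, min_eq_right (by linarith), min_eq_right (by linarith)]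

/-- A Łukasiewicz neuron with `n` negative unit weights, `p` positive unit weights
and bias `b = n` is disjunctive: its output equals the iterated Łukasiewicz
disjunction `¬x_1 ⊕ ... ⊕ ¬x_n ⊕ x_{n+1} ⊕ ... ⊕ x_m` (where `¬x = 1 - x`), and both
sides equal `min (∑_{i<n} (1 - x_i) + ∑_{n≤i<m} x_i) 1` for `m = n + p`. -/
theorem disjunctive_neuron (n p : ℕ) (x : Fin (n + p) → ℝ)
    (hx : ∀ i, x i ∈ Set.Icc (0:ℝ) 1) :
    min 1 (max 0 ((∑ i : Fin (n + p), (if (i : ℕ) < n then -(x i) else x i)) + (n : ℝ)))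
        = (List.ofFn (fun i : Fin (n + p) => if (i : ℕ) < n then 1 - x i else x i)).foldr
            lukDisj 0 ∧
    min 1 (max 0 ((∑ i : Fin (n + p), (if (i : ℕ) < n then -(x i) else x i)) + (n : ℝ)))
        = min (∑ i : Fin (n + p), (if (i : ℕ) < n then 1 - x i else x i)) 1 := by
  set y : Fin (n + p) → ℝ := fun i => if (i : ℕ) < n then 1 - x i else x i with hy
  have hy0 : ∀ i, 0 ≤ y i := by
    intro i
    have := hx i
    simp only [hy]
    split <;> [linarith [this.2]; exact this.1]
  have hcount : (∑ i : Fin (n + p), (if (i : ℕ) < n then (1:ℝ) else 0)) = n := by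
    rw [Fin.sum_univ_eq_sum_range (fun i => if i < n then (1:ℝ) else 0)]
    have : (Finset.range (n + p)).filter (· < n) = Finset.range n := by
      ext i
      simp only [Finset.mem_filter, Finset.mem_range]
      omega
    rw [Finset.sum_boole, this]
    simp
  have hsum : (∑ i : Fin (n + p), (if (i : ℕ) < n then -(x i) else x i)) + (n : ℝ)
      = ∑ i, y i := by
    rw [← hcount, ← Finset.sum_add_distrib]
    apply Finset.sum_congr rfl
    intro i _
    simp only [hy]
    split <;> ring
  have hynn : 0 ≤ ∑ i, y i := Finset.sum_nonneg fun i _ => hy0 i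
  have hmax : max 0 ((∑ i : Fin (n + p), (if (i : ℕ) < n then -(x i) else x i)) + (n : ℝ))
      = ∑ i, y i := by rw [hsum]; exact max_eq_right hynn
  have hmain : min 1 (max 0 ((∑ i : Fin (n + p), (if (i : ℕ) < n then -(x i) else x i)) + (n : ℝ)))
      = min (∑ i, y i) 1 := by rw [hmax, min_comm]
  constructor
  · rw [hmain, foldr_lukDisj]
    · congr 1
      rw [List.sum_ofFn]
    · intro a ha
      rw [List.mem_ofFn] at ha
      obtain ⟨i, rfl⟩ := ha
      exact hy0 i
  · exact hmain
end
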